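/- Let f(1+x) = Σ_{n≥0} a_n x^n ∈ 1 + xF_p[[x]] be an endomorphism of the group of 1-units with linear coefficient a_1 = 0. Then f(1+x) = g(1+x)^p for some endomorphism g of the 1-units. -/

import Mathlib

open PowerSeries

/-- Coefficientwise substitution of a power series `x` with zero constant term into `f`. -/
noncomputable def applySeries {R : Type*} [CommRing R] (f x : PowerSeries R) : PowerSeries R :=
  PowerSeries.mk fun k => ∑ n ∈ Finset.range (k + 1), coeff n f * coeff k (x ^ n)

/-- `f ∈ 1 + x R[[x]]` defines an endomorphism of the group of 1-units. -/
def IsOneUnitEndo {R : Type*} [CommRing R] (f : PowerSeries R) : Prop :=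
  constantCoeff f = 1 ∧
    ∀ u v : PowerSeries R, constantCoeff u = 1 → constantCoeff v = 1 →
      applySeries f (u * v - 1) = applySeries f (u - 1) * applySeries f (v - 1)

/-!
In the functional equation `f(s + t + st) = f(s) f(t)` take `s = X` and `t = X ^ N`. Modulo
`X ^ (2N)` one has `f(X + h) ≡ f + f' h` for `h = X ^ N (1 + X)` (Taylor expansion, as `h² ≡ 0`)
and `f(X ^ N) ≡ 1 + a₁ X ^ N`; comparing coefficients of degree `k + N` with `N = k + 1` gives
`(1 + X) f' = a₁ f`. If `a₁ = 0` then `f' = 0`, so `n aₙ = 0` and over `𝔽_p` only exponents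
divisible by `p` survive: `f = g(X ^ p) = g ^ p` with `g = ∑ a_{pn} X ^ n`, because Frobenius is
the identity on `𝔽_p`. As Frobenius is injective on `𝔽_p⟦X⟧`, `g` inherits the functional
equation from `f = g ^ p`.
-/

namespace PowerSeries

variable {R : Type*} [CommRing R]

theorem coeff_pow_eq_zero_of_lt {t : R⟦X⟧} (ht : constantCoeff t = 0) {k n : ℕ} (hkn : k < n) :
    coeff k (t ^ n) = 0 :=
  X_pow_dvd_iff.mp (pow_dvd_pow_of_dvd (X_dvd_iff.mpr ht) n) k hkn

theorem coeff_eq_of_X_pow_dvd_sub {a b : R⟦X⟧} {m k : ℕ} (h : (X : R⟦X⟧) ^ m ∣ a - b)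
    (hk : k < m) : coeff k a = coeff k b :=
  sub_eq_zero.mp (by simpa using X_pow_dvd_iff.mp h k hk)

theorem X_pow_dvd_sub_trunc (f : R⟦X⟧) (m : ℕ) : (X : R⟦X⟧) ^ m ∣ f - trunc m f :=
  ⟨_, by rw [sub_eq_iff_eq_add]; exact eq_X_pow_mul_shift_add_trunc m f⟩

theorem pow_dvd_subst_sub_aeval_trunc {t : R⟦X⟧} (ht : constantCoeff t = 0) (f : R⟦X⟧)
    (m : ℕ) : t ^ m ∣ f.subst t - Polynomial.aeval t (trunc m f) := by
  have hsubst := HasSubst.of_constantCoeff_zero' ht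
  have := map_dvd (substAlgHom hsubst) (X_pow_dvd_sub_trunc f m)
  rwa [map_pow, map_sub, substAlgHom_X, substAlgHom_coe, coe_substAlgHom] at this

theorem coeff_mul_subst_X_pow {N k : ℕ} (hk : k < N) (f g : R⟦X⟧) :
    coeff (k + N) (g * f.subst (X ^ N)) = coeff 0 f * coeff (k + N) g + coeff 1 f * coeff k g := by
  have hN : N ≠ 0 := by omega
  have htrunc : trunc 2 f = Polynomial.C (coeff 0 f) + Polynomial.C (coeff 1 f) * Polynomial.X := by
    rw [trunc_succ, trunc_one_left, Polynomial.C_mul_X_eq_monomial]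
  have hdvd := (pow_dvd_subst_sub_aeval_trunc (t := X ^ N) (by simp [hN]) f 2).mul_left g
  rw [← pow_mul, mul_sub, htrunc] at hdvd
  rw [coeff_eq_of_X_pow_dvd_sub hdvd (by omega)]
  simp only [map_add, Polynomial.aeval_C, Polynomial.aeval_X, map_mul, algebraMap_eq]
  rw [mul_add, map_add, mul_comm g, coeff_C_mul, mul_left_comm, coeff_C_mul, coeff_mul_X_pow]

theorem coeff_subst_X_add_of_X_pow_dvd {N K : ℕ} (hN : N ≠ 0) (hK : K < 2 * N) {h : R⟦X⟧}
    (hh : X ^ N ∣ h) (f : R⟦X⟧) :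
    coeff K (f.subst (X + h)) = coeff K f + coeff K (d⁄dX R f * h) := by
  have hX : X ∣ X + h := dvd_add dvd_rfl ((dvd_pow_self X hN).trans hh)
  have hsubst : X ^ (K + 1) ∣ f.subst (X + h) - Polynomial.aeval (X + h) (trunc (K + 1) f) :=
    (pow_dvd_pow_of_dvd hX _).trans (pow_dvd_subst_sub_aeval_trunc (X_dvd_iff.mp hX) f _)
  have haeval (Q : Polynomial R) : Polynomial.aeval X Q = (Q : R⟦X⟧) := by
    rw [← subst_coe HasSubst.X', X_subst]
  obtain ⟨c, hc⟩ := ((trunc (K + 1) f).map (algebraMap R R⟦X⟧)).binomExpansion X h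
  rw [Polynomial.derivative_map, Polynomial.eval_map_algebraMap, Polynomial.eval_map_algebraMap,
    Polynomial.eval_map_algebraMap, haeval, haeval, ← trunc_derivative] at hc
  have hsq : X ^ (N * 2) ∣ c * h ^ 2 := by
    rw [pow_mul]; exact (pow_dvd_pow_of_dvd hh 2).mul_left c
  have hderiv : X ^ (K + N) ∣ d⁄dX R f * h - (trunc K (d⁄dX R f) : R⟦X⟧) * h := by
    rw [← sub_mul, pow_add]; exact mul_dvd_mul (X_pow_dvd_sub_trunc _ _) hh
  rw [coeff_eq_of_X_pow_dvd_sub hsubst K.lt_succ_self, hc, map_add, map_add,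
    X_pow_dvd_iff.mp hsq K (by omega), add_zero, coeff_coe_trunc_of_lt K.lt_succ_self,
    coeff_eq_of_X_pow_dvd_sub hderiv (by omega)]

theorem eq_expand_of_coeff_eq_zero_of_not_dvd {p : ℕ} (hp : p ≠ 0) {f : R⟦X⟧}
    (hf : ∀ n, ¬ p ∣ n → coeff n f = 0) : f = expand p hp (mk fun n => coeff (p * n) f) := by
  ext n
  rw [coeff_expand]
  split_ifs with hpn
  · rw [coeff_mk, Nat.mul_div_cancel' hpn]
  · exact hf n hpn

end PowerSeries

theorem ZMod.expand_powerSeries_card {p : ℕ} [Fact p.Prime] (g : (ZMod p)⟦X⟧) :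
    expand p (NeZero.ne p) g = g ^ p := by
  rw [← MvPowerSeries.map_frobenius_expand p (NeZero.ne p), ZMod.frobenius_zmod]
  exact (congrFun map_id _).symm

section CommRing

variable {R : Type*} [CommRing R]

theorem applySeries_eq_subst (f : R⟦X⟧) {t : R⟦X⟧} (ht : constantCoeff t = 0) :
    applySeries f t = f.subst t := by
  ext k
  rw [applySeries, coeff_mk, coeff_subst' (HasSubst.of_constantCoeff_zero' ht),
    finsum_eq_sum_of_support_subset (s := Finset.range (k + 1))]
  · simp only [smul_eq_mul]
  · intro n hn
    by_contra hnk
    simp only [Finset.coe_range, Set.mem_Iio, not_lt] at hnk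
    exact hn (by simp only [coeff_pow_eq_zero_of_lt ht hnk, smul_zero])

theorem isOneUnitEndo_iff_subst {f : R⟦X⟧} :
    IsOneUnitEndo f ↔ constantCoeff f = 1 ∧ ∀ s t : R⟦X⟧, constantCoeff s = 0 →
      constantCoeff t = 0 → f.subst (s + t + s * t) = f.subst s * f.subst t := by
  refine and_congr_right fun _ => ⟨fun h s t hs ht => ?_, fun h u v hu hv => ?_⟩
  · have := h (1 + s) (1 + t) (by simp [hs]) (by simp [ht])
    rwa [show (1 + s) * (1 + t) - 1 = s + t + s * t by ring, add_sub_cancel_left,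
      add_sub_cancel_left, applySeries_eq_subst _ (by simp [hs, ht]),
      applySeries_eq_subst _ hs, applySeries_eq_subst _ ht] at this
  · have := h (u - 1) (v - 1) (by simp [hu]) (by simp [hv])
    rwa [show u - 1 + (v - 1) + (u - 1) * (v - 1) = u * v - 1 by ring,
      ← applySeries_eq_subst _ (by simp [hu, hv]), ← applySeries_eq_subst _ (by simp [hu]),
      ← applySeries_eq_subst _ (by simp [hv])] at this

theorem IsOneUnitEndo.one_add_X_mul_derivative {f : R⟦X⟧} (hf : IsOneUnitEndo f) :
    (1 + X) * d⁄dX R f = C (coeff 1 f) * f := by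
  obtain ⟨hf0, hmul⟩ := isOneUnitEndo_iff_subst.mp hf
  ext k
  have hXk : constantCoeff (X ^ (k + 1) : R⟦X⟧) = 0 := by simp
  have hcoeff := congrArg (coeff (k + (k + 1))) (hmul X (X ^ (k + 1)) constantCoeff_X hXk)
  have hsum : X + X ^ (k + 1) + X * X ^ (k + 1) = X + X ^ (k + 1) * (1 + X : R⟦X⟧) := by ring
  have hderiv : d⁄dX R f * (X ^ (k + 1) * (1 + X)) = (1 + X) * d⁄dX R f * X ^ (k + 1) := by ring
  rw [X_subst, coeff_mul_subst_X_pow (Nat.lt_add_one k), coeff_zero_eq_constantCoeff_apply, hf0,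
    hsum, coeff_subst_X_add_of_X_pow_dvd (N := k + 1) k.succ_ne_zero (by omega)
      (dvd_mul_right _ _), hderiv, coeff_mul_X_pow] at hcoeff
  rw [coeff_C_mul]
  linear_combination hcoeff

theorem IsOneUnitEndo.derivative_eq_zero {f : R⟦X⟧} (hf : IsOneUnitEndo f) (h1 : coeff 1 f = 0) :
    d⁄dX R f = 0 := by
  have hunit : IsUnit (1 + X : R⟦X⟧) := isUnit_iff_constantCoeff.mpr (by simp)
  rw [← hunit.mul_right_eq_zero, hf.one_add_X_mul_derivative, h1, map_zero, zero_mul]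

theorem IsOneUnitEndo.natCast_mul_coeff_eq_zero {f : R⟦X⟧} (hf : IsOneUnitEndo f)
    (h1 : coeff 1 f = 0) (n : ℕ) : (n : R) * coeff n f = 0 := by
  cases n with
  | zero => simp
  | succ m =>
    have := congrArg (coeff m) (hf.derivative_eq_zero h1)
    rw [coeff_derivative, map_zero] at this
    push_cast
    linear_combination this

end CommRing

theorem IsOneUnitEndo.of_pow_expChar {K : Type*} [CommRing K] [IsDomain K] (p : ℕ)
    [ExpChar K p] {g : K⟦X⟧} (hg : IsOneUnitEndo (g ^ p)) : IsOneUnitEndo g := by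
  have : ExpChar K⟦X⟧ p := expChar_of_injective_ringHom C_injective p
  obtain ⟨hg0, hmul⟩ := isOneUnitEndo_iff_subst.mp hg
  refine isOneUnitEndo_iff_subst.mpr ⟨frobenius_inj K p ?_, fun s t hs ht => ?_⟩
  · rw [frobenius_def, frobenius_def, ← map_pow, hg0, one_pow]
  · apply frobenius_inj K⟦X⟧ p
    have hst := hmul s t hs ht
    rwa [subst_pow (.of_constantCoeff_zero' (by simp [hs, ht])),
      subst_pow (.of_constantCoeff_zero' hs), subst_pow (.of_constantCoeff_zero' ht),
      ← mul_pow] at hst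

/-- An endomorphism of the 1-units with vanishing linear coefficient is the `p`-th power of an
endomorphism of the 1-units. -/
theorem endo_linear_coeff_zero_is_pth_power {p : ℕ} [Fact p.Prime]
    (f : PowerSeries (ZMod p)) (hf : IsOneUnitEndo f) (h1 : coeff 1 f = 0) :
    ∃ g : PowerSeries (ZMod p), IsOneUnitEndo g ∧ f = g ^ p := by
  have hcoeff (n : ℕ) (hn : ¬ p ∣ n) : coeff n f = 0 :=
    (mul_eq_zero.mp (hf.natCast_mul_coeff_eq_zero h1 n)).resolve_left
      (by rwa [ZMod.natCast_eq_zero_iff])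
  set g : (ZMod p)⟦X⟧ := mk fun n => coeff (p * n) f
  have hfg : f = g ^ p :=
    (eq_expand_of_coeff_eq_zero_of_not_dvd (NeZero.ne p) hcoeff).trans
      (ZMod.expand_powerSeries_card g)
  exact ⟨g, (hfg ▸ hf).of_pow_expChar p, hfg⟩
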